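/- Fix n ∈ ℕ and K ∈ [1,∞), and let (X,d_X) be a metric space. Then the following two assertions are equivalent: (1) for every n×n symmetric stochastic matrix A one has γ(A, d_X²) ≤ K/(1−λ₂(A)); (2) for every D ∈ (K,∞) and every x_1,…,x_n ∈ X there exists a nonconstant mapping f : {x_1,…,x_n} → ℓ₂ such that ∑_{i=1}^n ∑_{j=1}^n ‖f(x_i)−f(x_j)‖_{ℓ₂}² ≥ (‖f‖_Lip² / D) · ∑_{i=1}^n ∑_{j=1}^n d_X(x_i,x_j)². -/

import Mathlib

open scoped ENNReal

/-- An `n × n` real matrix is symmetric and stochastic. -/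
def IsSymmStochastic {n : ℕ} (A : Matrix (Fin n) (Fin n) ℝ) : Prop :=
  (∀ i j, A i j = A j i) ∧ (∀ i j, 0 ≤ A i j) ∧ ∀ i, ∑ j, A i j = 1

/-- The nonlinear spectral gap quantity `γ(A, d_X^p)`. -/
noncomputable def gammaNL {n : ℕ} (A : Matrix (Fin n) (Fin n) ℝ)
    (X : Type*) [PseudoMetricSpace X] (p : ℝ) : ℝ≥0∞ :=
  sInf {g : ℝ≥0∞ | 0 < g ∧ ∀ x : Fin n → X,
    ENNReal.ofReal ((∑ i, ∑ j, dist (x i) (x j) ^ p) / (n : ℝ) ^ 2) ≤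
      g / (n : ℝ≥0∞) * ENNReal.ofReal (∑ i, ∑ j, A i j * dist (x i) (x j) ^ p)}

/-- `λ₂(A)`, the second largest eigenvalue (counted with multiplicity) of a symmetric
stochastic matrix `A`, characterized via the Rayleigh quotient over vectors orthogonal to
the all-ones vector (which is an eigenvector of eigenvalue `λ₁(A) = 1`). -/
noncomputable def lambdaTwo {n : ℕ} (A : Matrix (Fin n) (Fin n) ℝ) : ℝ :=
  sSup {t : ℝ | ∃ x : Fin n → ℝ, (∑ i, x i = 0) ∧ (∑ i, x i ^ 2 = 1) ∧
    t = ∑ i, ∑ j, A i j * x i * x j}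

/-!
(2) ⇒ (1): coordinatewise, every map into `ℓ₂` satisfies the Poincaré inequality
`(1 - λ₂(A)) ∑ᵢⱼ ‖fᵢ - fⱼ‖² ≤ n ∑ᵢⱼ aᵢⱼ ‖fᵢ - fⱼ‖²`; pulling it back along a map as in (2) costs
the factor `D`, and then `D ↓ K`.

(1) ⇒ (2): assertion (1) says `(1 - λ₂(A)) ∑ d(xᵢ,xⱼ)² ≤ K n ∑ aᵢⱼ d(xᵢ,xⱼ)²` for every `A`.
Testing an eigenvector `y` of `λ₂(A)` shows that, for each `A`, some negative-type array `Φ` with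
`∑ Φ = ∑ d²` (a multiple of `(yᵢ - yⱼ)²`) has `⟨A, Φ⟩ ≤ K ⟨A, d²⟩`. These arrays form a compact
convex set, so by Hahn–Banach a single `Φ` satisfies `Φ ≤ K d²` entrywise: a functional separating
it from `{Ψ | Ψ ≤ K d²}` would be a nonnegative matrix, hence, after symmetrising and filling the
diagonal, a multiple of a symmetric stochastic matrix. By Schoenberg, `Φᵢⱼ = ‖fᵢ - fⱼ‖²` for some
`f` into `ℓ₂`, which is then `√K`-Lipschitz with `∑ ‖fᵢ - fⱼ‖² = ∑ d²`.
-/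

open Finset

section QuadraticForms

variable {ι R : Type*} [Fintype ι] [CommRing R]

theorem sum_sum_mul_sub_sq (W : Matrix ι ι R) (y : ι → R) :
    ∑ i, ∑ j, W i j * (y i - y j) ^ 2 =
      ∑ i, (∑ j, W i j) * y i ^ 2 + ∑ j, (∑ i, W i j) * y j ^ 2
        - 2 * ∑ i, ∑ j, W i j * y i * y j := by
  simp only [sum_mul, mul_sum]
  rw [sum_comm (f := fun j i => W i j * y j ^ 2)]
  simp only [← sum_add_distrib, ← sum_sub_distrib]
  exact sum_congr rfl fun i _ => sum_congr rfl fun j _ => by ring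

theorem sum_sum_sub_sq (y : ι → R) :
    ∑ i, ∑ j, (y i - y j) ^ 2 = 2 * Fintype.card ι * ∑ i, y i ^ 2 - 2 * (∑ i, y i) ^ 2 := by
  have h := sum_sum_mul_sub_sq (fun _ _ => 1) y
  simp only [one_mul, mul_one, sum_const, card_univ, nsmul_eq_mul, ← mul_sum, ← sum_mul] at h
  rw [h]
  ring

theorem sum_sum_mul_mul_sub_sq_of_sum_eq_zero {c : ι → R} (hc : ∑ i, c i = 0) (y : ι → R) :
    ∑ i, ∑ j, c i * c j * (y i - y j) ^ 2 = -2 * (∑ i, c i * y i) ^ 2 := by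
  have hsq : ∑ i, ∑ j, c i * c j * y i * y j = (∑ i, c i * y i) ^ 2 := by
    rw [sq, sum_mul_sum]
    exact sum_congr rfl fun i _ => sum_congr rfl fun j _ => by ring
  rw [sum_sum_mul_sub_sq (fun i j => c i * c j), hsq]
  simp only [← mul_sum, ← sum_mul, hc, zero_mul, mul_zero, sum_const_zero]
  ring

variable {n : ℕ}

theorem IsSymmStochastic.sum_col {A : Matrix (Fin n) (Fin n) ℝ} (hA : IsSymmStochastic A)
    (j : Fin n) : ∑ i, A i j = 1 := by
  simpa only [hA.1 _ j] using hA.2.2 j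

theorem IsSymmStochastic.sum_sum_mul_sub_sq {A : Matrix (Fin n) (Fin n) ℝ}
    (hA : IsSymmStochastic A) (y : Fin n → ℝ) :
    ∑ i, ∑ j, A i j * (y i - y j) ^ 2 =
      2 * ∑ i, y i ^ 2 - 2 * ∑ i, ∑ j, A i j * y i * y j := by
  rw [_root_.sum_sum_mul_sub_sq]
  simp only [hA.2.2, hA.sum_col, one_mul]
  ring

end QuadraticForms

section LambdaTwo

variable {n : ℕ}

def meanZeroSphere (n : ℕ) : Set (Fin n → ℝ) := {x | ∑ i, x i = 0 ∧ ∑ i, x i ^ 2 = 1}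

theorem isCompact_meanZeroSphere : IsCompact (meanZeroSphere n) := by
  refine (isCompact_univ_pi fun _ => isCompact_Icc (a := (-1 : ℝ)) (b := 1)).of_isClosed_subset
    ((isClosed_eq (by fun_prop) continuous_const).inter
      (isClosed_eq (by fun_prop) continuous_const))
    fun x hx i _ => abs_le.mp (sq_le_one_iff_abs_le_one _ |>.mp ?_)
  exact hx.2 ▸ single_le_sum (fun j _ => sq_nonneg (x j)) (mem_univ i)

theorem inv_sqrt_smul_mem_meanZeroSphere {z : Fin n → ℝ} (hz : ∑ i, z i = 0)
    (hpos : 0 < ∑ i, z i ^ 2) : (√(∑ i, z i ^ 2))⁻¹ • z ∈ meanZeroSphere n := by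
  simp [meanZeroSphere, ← mul_sum, hz, mul_pow, inv_pow, Real.sq_sqrt hpos.le, hpos.ne']

theorem meanZeroSphere_nonempty (hn : 2 ≤ n) : (meanZeroSphere n).Nonempty := by
  set a : Fin n := ⟨0, by omega⟩
  set b : Fin n := ⟨1, by omega⟩
  have hab : a ≠ b := by simp [a, b, Fin.ext_iff]
  set z : Fin n → ℝ := Pi.single a 1 - Pi.single b 1
  have hza : z a = 1 := by simp [z, hab]
  refine ⟨_, inv_sqrt_smul_mem_meanZeroSphere (z := z) (by simp [z, sum_sub_distrib]) ?_⟩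
  exact lt_of_lt_of_le (by simp [hza]) (single_le_sum (fun i _ => sq_nonneg (z i)) (mem_univ a))

theorem lambdaTwo_eq_sSup_image (A : Matrix (Fin n) (Fin n) ℝ) :
    lambdaTwo A = sSup ((fun x => ∑ i, ∑ j, A i j * x i * x j) '' meanZeroSphere n) := by
  unfold lambdaTwo
  congr 1
  ext t
  simp [meanZeroSphere, eq_comm, and_assoc]

theorem sum_sum_mul_mul_le_lambdaTwo_mul (A : Matrix (Fin n) (Fin n) ℝ) {z : Fin n → ℝ}
    (hz : ∑ i, z i = 0) : ∑ i, ∑ j, A i j * z i * z j ≤ lambdaTwo A * ∑ i, z i ^ 2 := by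
  set Q := ∑ i, z i ^ 2
  rcases (sum_nonneg fun i _ => sq_nonneg (z i) : 0 ≤ Q).eq_or_lt with hQ | hQ
  · have hz0 : ∀ i, z i = 0 := fun i => by
      simpa using (sum_eq_zero_iff_of_nonneg fun i _ => sq_nonneg (z i)).mp hQ.symm i (mem_univ i)
    simp [Q, hz0]
  set y := (√Q)⁻¹ • z
  have hy : ∑ i, ∑ j, A i j * y i * y j ≤ lambdaTwo A := by
    rw [lambdaTwo_eq_sSup_image]
    exact le_csSup ((isCompact_meanZeroSphere.image (by fun_prop)).bddAbove)
      ⟨y, inv_sqrt_smul_mem_meanZeroSphere hz hQ, rfl⟩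
  have hQy : Q * ((√Q)⁻¹) ^ 2 = 1 := by
    rw [inv_pow, Real.sq_sqrt hQ.le, mul_inv_cancel₀ hQ.ne']
  have hzy : ∑ i, ∑ j, A i j * z i * z j = Q * ∑ i, ∑ j, A i j * y i * y j := by
    simp only [y, Pi.smul_apply, smul_eq_mul, mul_sum]
    refine sum_congr rfl fun i _ => sum_congr rfl fun j _ => ?_
    linear_combination (-(A i j * z i * z j)) * hQy
  rw [hzy, mul_comm (lambdaTwo A)]
  exact mul_le_mul_of_nonneg_left hy hQ.le

theorem exists_mem_meanZeroSphere_eq_lambdaTwo (A : Matrix (Fin n) (Fin n) ℝ) (hn : 2 ≤ n) :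
    ∃ y ∈ meanZeroSphere n, ∑ i, ∑ j, A i j * y i * y j = lambdaTwo A := by
  rw [lambdaTwo_eq_sSup_image]
  exact (isCompact_meanZeroSphere.image (by fun_prop)).sSup_mem
    ((meanZeroSphere_nonempty hn).image _)

end LambdaTwo

section Poincare

variable {n : ℕ} {A : Matrix (Fin n) (Fin n) ℝ}

theorem IsSymmStochastic.poincare (hA : IsSymmStochastic A) (v : Fin n → ℝ) :
    (1 - lambdaTwo A) * ∑ i, ∑ j, (v i - v j) ^ 2 ≤ n * ∑ i, ∑ j, A i j * (v i - v j) ^ 2 := by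
  obtain rfl | hn := n.eq_zero_or_pos
  · simp
  set z : Fin n → ℝ := fun i => v i - (∑ k, v k) / n
  have hvz : ∀ i j, v i - v j = z i - z j := fun i j => by simp [z]
  have hz : ∑ i, z i = 0 := by
    simp only [z, sum_sub_distrib, sum_const, card_univ, Fintype.card_fin, nsmul_eq_mul]
    field_simp
    ring
  simp only [hvz, sum_sum_sub_sq, Fintype.card_fin, hz, hA.sum_sum_mul_sub_sq]
  have hgap := sum_sum_mul_mul_le_lambdaTwo_mul A hz
  nlinarith [mul_nonneg (Nat.cast_nonneg n : (0 : ℝ) ≤ n) (sub_nonneg.mpr hgap)]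

theorem lp.hasSum_sq_sub (g h : lp (fun _ : ℕ => ℝ) 2) :
    HasSum (fun k => (g k - h k) ^ 2) (‖g - h‖ ^ 2) := by
  simpa [real_inner_self_eq_norm_sq, sq] using lp.hasSum_inner (𝕜 := ℝ) (g - h) (g - h)

theorem IsSymmStochastic.poincare_lp (hA : IsSymmStochastic A) (f : Fin n → lp (fun _ : ℕ => ℝ) 2) :
    (1 - lambdaTwo A) * ∑ i, ∑ j, ‖f i - f j‖ ^ 2 ≤ n * ∑ i, ∑ j, A i j * ‖f i - f j‖ ^ 2 := by
  have hf := fun i j => lp.hasSum_sq_sub (f i) (f j)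
  have h1 : HasSum (fun k => ∑ i, ∑ j, (f i k - f j k) ^ 2) (∑ i, ∑ j, ‖f i - f j‖ ^ 2) :=
    hasSum_sum fun i _ => hasSum_sum fun j _ => hf i j
  have h2 : HasSum (fun k => ∑ i, ∑ j, A i j * (f i k - f j k) ^ 2)
      (∑ i, ∑ j, A i j * ‖f i - f j‖ ^ 2) :=
    hasSum_sum fun i _ => hasSum_sum fun j _ => (hf i j).mul_left (A i j)
  exact hasSum_le (fun k => hA.poincare fun i => f i k) (h1.mul_left _) (h2.mul_left _)

end Poincare

section GammaNL

variable {n : ℕ} {A : Matrix (Fin n) (Fin n) ℝ} {X : Type*} [PseudoMetricSpace X] {p g : ℝ}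

theorem le_mul_of_forall_lt_mul {a b c : ℝ} (h : ∀ d, a < d → c ≤ d * b) : c ≤ a * b :=
  ge_of_tendsto ((continuous_mul_const b).tendsto a |>.mono_left nhdsWithin_le_nhds)
    (eventually_nhdsWithin_of_forall (s := Set.Ioi a) h)

theorem ENNReal.ofReal_div_sq_le_ofReal_div_mul_iff (hn : 0 < n) {a b : ℝ} (hg : 0 ≤ g)
    (hb : 0 ≤ b) :
    ENNReal.ofReal (a / n ^ 2) ≤ ENNReal.ofReal g / n * ENNReal.ofReal b ↔ a ≤ g * n * b := by
  have hn' : (0 : ℝ) < n := by exact_mod_cast hn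
  rw [← ENNReal.ofReal_natCast, ← ENNReal.ofReal_div_of_pos hn',
    ← ENNReal.ofReal_mul (by positivity),
    ENNReal.ofReal_le_ofReal_iff (by positivity), div_le_iff₀ (by positivity)]
  rw [show g / n * b * n ^ 2 = g * n * b by field_simp]

theorem gammaNL_le_ofReal_iff (hA : ∀ i j, 0 ≤ A i j) (hg : 0 < g) :
    gammaNL A X p ≤ ENNReal.ofReal g ↔ ∀ x : Fin n → X,
      ∑ i, ∑ j, dist (x i) (x j) ^ p ≤ g * n * ∑ i, ∑ j, A i j * dist (x i) (x j) ^ p := by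
  obtain rfl | hn := n.eq_zero_or_pos
  · simp only [univ_eq_empty, sum_empty, mul_zero, le_refl, implies_true, iff_true]
    exact sInf_le ⟨ENNReal.ofReal_pos.mpr hg, fun x => by simp⟩
  have hSA : ∀ x : Fin n → X, 0 ≤ ∑ i, ∑ j, A i j * dist (x i) (x j) ^ p := fun x =>
    sum_nonneg fun i _ => sum_nonneg fun j _ => mul_nonneg (hA i j) (by positivity)
  constructor
  · intro h x
    rw [mul_assoc]
    refine le_mul_of_forall_lt_mul fun d hd => ?_
    have hd0 : 0 < d := hg.trans hd
    obtain ⟨γ, ⟨-, hγ⟩, hγd⟩ :=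
      sInf_lt_iff.mp (h.trans_lt ((ENNReal.ofReal_lt_ofReal_iff hd0).mpr hd))
    rw [← mul_assoc, ← ENNReal.ofReal_div_sq_le_ofReal_div_mul_iff hn hd0.le (hSA x)]
    exact (hγ x).trans (by gcongr)
  · intro h
    exact sInf_le ⟨ENNReal.ofReal_pos.mpr hg, fun x =>
      (ENNReal.ofReal_div_sq_le_ofReal_div_mul_iff hn hg.le (hSA x)).mpr (h x)⟩

theorem IsSymmStochastic.gammaNL_two_le_iff (hA : IsSymmStochastic A) {K : ℝ} (hK : 0 < K) :
    gammaNL A X 2 ≤ ENNReal.ofReal K / ENNReal.ofReal (1 - lambdaTwo A) ↔ ∀ x : Fin n → X,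
      (1 - lambdaTwo A) * ∑ i, ∑ j, dist (x i) (x j) ^ 2 ≤
        K * n * ∑ i, ∑ j, A i j * dist (x i) (x j) ^ 2 := by
  rcases le_or_gt (1 - lambdaTwo A) 0 with hgap | hgap
  · rw [ENNReal.ofReal_of_nonpos hgap, ENNReal.div_zero (by simpa using hK)]
    refine iff_of_true le_top fun x =>
      (mul_nonpos_of_nonpos_of_nonneg hgap (by positivity)).trans ?_
    exact mul_nonneg (by positivity) (sum_nonneg fun i _ => sum_nonneg fun j _ =>
      mul_nonneg (hA.2.1 i j) (by positivity))
  rw [← ENNReal.ofReal_div_of_pos hgap, gammaNL_le_ofReal_iff hA.2.1 (div_pos hK hgap)]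
  simp only [Real.rpow_two]
  refine forall_congr' fun x => ?_
  rw [div_mul_eq_mul_div, div_mul_eq_mul_div, le_div_iff₀' hgap]

end GammaNL

theorem IsSymmStochastic.poincare_of_lipschitz_lp {n : ℕ} {A : Matrix (Fin n) (Fin n) ℝ}
    (hA : IsSymmStochastic A) {X : Type*} [PseudoMetricSpace X] {D L : ℝ} (hD : 0 < D)
    (hL : 0 < L) {x : Fin n → X} {f : Fin n → lp (fun _ : ℕ => ℝ) 2}
    (hLip : ∀ i j, ‖f i - f j‖ ≤ L * dist (x i) (x j))
    (hf : L ^ 2 / D * ∑ i, ∑ j, dist (x i) (x j) ^ 2 ≤ ∑ i, ∑ j, ‖f i - f j‖ ^ 2) :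
    (1 - lambdaTwo A) * ∑ i, ∑ j, dist (x i) (x j) ^ 2 ≤
      D * n * ∑ i, ∑ j, A i j * dist (x i) (x j) ^ 2 := by
  have hSA : 0 ≤ ∑ i, ∑ j, A i j * dist (x i) (x j) ^ 2 :=
    sum_nonneg fun i _ => sum_nonneg fun j _ => mul_nonneg (hA.2.1 i j) (by positivity)
  rcases le_or_gt (1 - lambdaTwo A) 0 with hgap | hgap
  · exact (mul_nonpos_of_nonpos_of_nonneg hgap (by positivity)).trans (by positivity)
  have hAf : ∑ i, ∑ j, A i j * ‖f i - f j‖ ^ 2 ≤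
      L ^ 2 * ∑ i, ∑ j, A i j * dist (x i) (x j) ^ 2 := by
    simp only [mul_sum]
    refine sum_le_sum fun i _ => sum_le_sum fun j _ => ?_
    calc A i j * ‖f i - f j‖ ^ 2 ≤ A i j * (L * dist (x i) (x j)) ^ 2 := by
          gcongr
          · exact hA.2.1 i j
          · exact hLip i j
      _ = L ^ 2 * (A i j * dist (x i) (x j) ^ 2) := by ring
  refine le_of_mul_le_mul_left ?_ (by positivity : 0 < L ^ 2)
  calc L ^ 2 * ((1 - lambdaTwo A) * ∑ i, ∑ j, dist (x i) (x j) ^ 2)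
      = D * ((1 - lambdaTwo A) * (L ^ 2 / D * ∑ i, ∑ j, dist (x i) (x j) ^ 2)) := by
        field_simp
    _ ≤ D * ((1 - lambdaTwo A) * ∑ i, ∑ j, ‖f i - f j‖ ^ 2) := by gcongr
    _ ≤ D * (n * ∑ i, ∑ j, A i j * ‖f i - f j‖ ^ 2) :=
        mul_le_mul_of_nonneg_left (hA.poincare_lp f) hD.le
    _ ≤ D * (n * (L ^ 2 * ∑ i, ∑ j, A i j * dist (x i) (x j) ^ 2)) := by gcongr
    _ = L ^ 2 * (D * n * ∑ i, ∑ j, A i j * dist (x i) (x j) ^ 2) := by ring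

section NegativeType

variable {n : ℕ}

/-- By Schoenberg's theorem these are exactly the arrays `‖f i - f j‖²` of points of `ℓ₂`. -/
def IsNegType (Φ : Fin n → Fin n → ℝ) : Prop :=
  (∀ i j, Φ i j = Φ j i) ∧ (∀ i, Φ i i = 0) ∧
    ∀ c : Fin n → ℝ, ∑ i, c i = 0 → ∑ i, ∑ j, c i * c j * Φ i j ≤ 0

theorem IsNegType.nonneg {Φ : Fin n → Fin n → ℝ} (hΦ : IsNegType Φ) (i j : Fin n) :
    0 ≤ Φ i j := by
  obtain rfl | hij := eq_or_ne i j
  · exact (hΦ.2.1 i).ge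
  have h := hΦ.2.2 (Pi.single i 1 - Pi.single j 1) (by simp [sum_sub_distrib])
  simp [Pi.single_apply, sub_mul, mul_sub, sum_sub_distrib, ite_mul, hΦ.2.1, hΦ.1 j i] at h
  linarith

theorem isNegType_mul_sub_sq {t : ℝ} (ht : 0 ≤ t) (y : Fin n → ℝ) :
    IsNegType fun i j => t * (y i - y j) ^ 2 := by
  refine ⟨fun i j => by ring, fun i => by simp, fun c hc => ?_⟩
  have h := sum_sum_mul_mul_sub_sq_of_sum_eq_zero hc y
  simp only [mul_left_comm _ t, ← mul_sum, h]
  exact mul_nonpos_of_nonneg_of_nonpos ht (by nlinarith [sq_nonneg (∑ i, c i * y i)])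

theorem lp.norm_sum_single_sub_sum_single_sq (s : Finset ℕ) (a b : ℕ → ℝ) :
    ‖∑ k ∈ s, lp.single 2 k (a k) - ∑ k ∈ s, lp.single 2 k (b k)‖ ^ 2 =
      ∑ k ∈ s, (a k - b k) ^ 2 := by
  rw [← sum_sub_distrib]
  simp_rw [← lp.single_sub]
  simpa [Real.rpow_two] using lp.norm_sum_single (p := 2) (by norm_num) (fun k => a k - b k) s

/-- If `Φ i j = ‖f i - f j‖²`, this is the Gram matrix of the vectors `f i - f i₀`. -/
noncomputable def gramAt (Φ : Fin n → Fin n → ℝ) (i₀ : Fin n) : Matrix (Fin n) (Fin n) ℝ :=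
  Matrix.of fun i j => (Φ i i₀ + Φ j i₀ - Φ i j) / 2

theorem IsNegType.posSemidef_gramAt {Φ : Fin n → Fin n → ℝ} (hΦ : IsNegType Φ) (i₀ : Fin n) :
    (gramAt Φ i₀).PosSemidef := by
  obtain ⟨hsymm, hdiag, hneg⟩ := hΦ
  set G := gramAt Φ i₀
  have hG₀ : ∀ i j, i = i₀ ∨ j = i₀ → G i j = 0 := by
    rintro i j (rfl | rfl)
    · simp [G, gramAt, hdiag, hsymm j i]
    · simp [G, gramAt, hdiag]
  have hGc : ∀ c : Fin n → ℝ, ∑ i, c i = 0 →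
      ∑ i, ∑ j, c i * c j * G i j = -(∑ i, ∑ j, c i * c j * Φ i j) / 2 := by
    intro c hc
    have e : ∀ i j, c i * c j * G i j =
        c i * Φ i i₀ * c j / 2 + c i * (c j * Φ j i₀) / 2 - c i * c j * Φ i j / 2 := by
      intro i j
      simp only [G, gramAt, Matrix.of_apply]
      ring
    simp only [e, sum_add_distrib, sum_sub_distrib, ← sum_div, ← mul_sum, ← sum_mul, hc]
    ring
  refine Matrix.posSemidef_iff_dotProduct_mulVec.mpr ⟨?_, fun x => ?_⟩
  · ext i j
    simp [G, gramAt, hsymm i j]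
    ring
  set c : Fin n → ℝ := x - Pi.single i₀ (∑ i, x i)
  have hc : ∑ i, c i = 0 := by simp [c, sum_sub_distrib]
  -- `G` vanishes on row and column `i₀`, so `x` may be replaced by the mean-zero vector `c`.
  have hxc : star x ⬝ᵥ G.mulVec x = ∑ i, ∑ j, c i * c j * G i j := by
    simp only [star_trivial, dotProduct, Matrix.mulVec, mul_sum]
    refine sum_congr rfl fun i _ => sum_congr rfl fun j _ => ?_
    by_cases h : i = i₀ ∨ j = i₀
    · simp [hG₀ i j h]
    · obtain ⟨hi, hj⟩ := not_or.mp h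
      simp [c, hi, hj]
      ring
  rw [hxc, hGc c hc]
  linarith [hneg c hc]

theorem Matrix.PosSemidef.exists_lp {ι : Type*} [Fintype ι] {G : Matrix ι ι ℝ}
    (hG : G.PosSemidef) :
    ∃ f : ι → lp (fun _ : ℕ => ℝ) 2, ∀ i j, ‖f i - f j‖ ^ 2 = G i i + G j j - 2 * G i j := by
  obtain ⟨m, v, hv⟩ := Matrix.posSemidef_iff_eq_sum_vecMulVec.mp hG
  set u : ℕ → ι → ℝ := fun k => if h : k < m then v ⟨k, h⟩ else 0
  have hGu : ∀ i j, G i j = ∑ k ∈ range m, u k i * u k j := by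
    intro i j
    rw [hv, ← Fin.sum_univ_eq_sum_range (fun k => u k i * u k j)]
    simp [u, Matrix.sum_apply, Matrix.vecMulVec_apply]
  refine ⟨fun i => ∑ k ∈ range m, lp.single 2 k (u k i), fun i j => ?_⟩
  rw [lp.norm_sum_single_sub_sum_single_sq]
  simp only [hGu, ← sum_add_distrib, mul_sum, ← sum_sub_distrib]
  exact sum_congr rfl fun k _ => by ring

theorem IsNegType.exists_lp {Φ : Fin n → Fin n → ℝ} (hΦ : IsNegType Φ) :
    ∃ f : Fin n → lp (fun _ : ℕ => ℝ) 2, ∀ i j, ‖f i - f j‖ ^ 2 = Φ i j := by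
  obtain rfl | hn := n.eq_zero_or_pos
  · exact ⟨0, fun i => i.elim0⟩
  obtain ⟨f, hf⟩ := (hΦ.posSemidef_gramAt ⟨0, hn⟩).exists_lp
  refine ⟨f, fun i j => ?_⟩
  rw [hf]
  simp [gramAt, hΦ.2.1, hΦ.1 j]
  ring

end NegativeType

section Duality

variable {n : ℕ}

def negTypeWithSum (n : ℕ) (T : ℝ) : Set (Fin n → Fin n → ℝ) :=
  {Φ | IsNegType Φ ∧ ∑ i, ∑ j, Φ i j = T}

theorem convex_negTypeWithSum (T : ℝ) : Convex ℝ (negTypeWithSum n T) := by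
  rintro Φ ⟨⟨hΦs, hΦd, hΦn⟩, hΦT⟩ Ψ ⟨⟨hΨs, hΨd, hΨn⟩, hΨT⟩ a b ha hb hab
  refine ⟨⟨fun i j => by simp [hΦs i j, hΨs i j], fun i => by simp [hΦd, hΨd], fun c hc => ?_⟩, ?_⟩
  · simp only [Pi.add_apply, Pi.smul_apply, smul_eq_mul, mul_add, sum_add_distrib,
      mul_left_comm _ a, mul_left_comm _ b, ← mul_sum]
    exact add_nonpos (mul_nonpos_of_nonneg_of_nonpos ha (hΦn c hc))
      (mul_nonpos_of_nonneg_of_nonpos hb (hΨn c hc))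
  · simp only [Pi.add_apply, Pi.smul_apply, smul_eq_mul, sum_add_distrib, ← mul_sum, hΦT, hΨT,
      ← add_mul, hab, one_mul]

theorem isCompact_negTypeWithSum (T : ℝ) : IsCompact (negTypeWithSum n T) := by
  refine (isCompact_univ_pi fun _ => isCompact_univ_pi fun _ => isCompact_Icc (a := 0) (b := T))
    |>.of_isClosed_subset ?_ fun Φ ⟨hΦ, hT⟩ i _ j _ => ⟨hΦ.nonneg i j, ?_⟩
  · simp only [negTypeWithSum, IsNegType, Set.ofPred_and, Set.ofPred_forall]
    refine .inter (.inter (isClosed_iInter fun i => isClosed_iInter fun j =>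
      isClosed_eq (by fun_prop) (by fun_prop)) (.inter (isClosed_iInter fun i =>
        isClosed_eq (by fun_prop) continuous_const) (isClosed_iInter fun c =>
          isClosed_iInter fun _ => isClosed_le (by fun_prop) continuous_const)))
      (isClosed_eq (by fun_prop) continuous_const)
  · calc Φ i j ≤ ∑ j, Φ i j := single_le_sum (fun k _ => hΦ.nonneg i k) (mem_univ j)
      _ ≤ ∑ i, ∑ j, Φ i j :=
        single_le_sum (f := fun i => ∑ j, Φ i j) (fun k _ => sum_nonneg fun l _ => hΦ.nonneg k l)
          (mem_univ i)
      _ = T := hT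

theorem IsSymmStochastic.exists_mem_negTypeWithSum_le {A : Matrix (Fin n) (Fin n) ℝ}
    (hA : IsSymmStochastic A) (hn : 2 ≤ n) {T R : ℝ} (hT : 0 ≤ T)
    (h : (1 - lambdaTwo A) * T ≤ n * R) :
    ∃ Φ ∈ negTypeWithSum n T, ∑ i, ∑ j, A i j * Φ i j ≤ R := by
  obtain ⟨y, ⟨hy0, hy1⟩, hyA⟩ := exists_mem_meanZeroSphere_eq_lambdaTwo A hn
  have hn' : (0 : ℝ) < n := by exact_mod_cast (by omega : 0 < n)
  refine ⟨fun i j => T / (2 * n) * (y i - y j) ^ 2,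
    ⟨isNegType_mul_sub_sq (by positivity) y, ?_⟩, ?_⟩
  · simp only [← mul_sum, sum_sum_sub_sq, Fintype.card_fin, hy0, hy1]
    field_simp
    ring
  · simp only [mul_left_comm (A _ _), ← mul_sum, hA.sum_sum_mul_sub_sq, hy1, hyA]
    calc T / (2 * n) * (2 * 1 - 2 * lambdaTwo A) = (1 - lambdaTwo A) * T / n := by
          field_simp
      _ ≤ R := (div_le_iff₀' hn').mpr h

theorem exists_symmStochastic_sum_sum_mul_eq (B : Fin n → Fin n → ℝ) (hB : ∀ i j, 0 ≤ B i j) :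
    ∃ c > 0, ∃ A : Matrix (Fin n) (Fin n) ℝ, IsSymmStochastic A ∧
      ∀ Ψ : Fin n → Fin n → ℝ, (∀ i j, Ψ i j = Ψ j i) → (∀ i, Ψ i i = 0) →
        ∑ i, ∑ j, B i j * Ψ i j = c * ∑ i, ∑ j, A i j * Ψ i j := by
  -- Symmetrise `B`, scale it, and put the slack of each row on the diagonal, which `Ψ` ignores.
  set c := ∑ i, ∑ j, B i j + 1
  have hc : 0 < c := add_pos_of_nonneg_of_pos (sum_nonneg fun i _ => sum_nonneg fun j _ => hB i j)
    one_pos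
  set S : Fin n → Fin n → ℝ := fun i j => (B i j + B j i) / 2
  have hS : ∀ i, ∑ j, S i j < c := fun i => by
    have h1 : ∑ j, B i j ≤ ∑ i, ∑ j, B i j :=
      single_le_sum (f := fun i => ∑ j, B i j) (fun k _ => sum_nonneg fun l _ => hB k l)
        (mem_univ i)
    have h2 : ∑ j, B j i ≤ ∑ i, ∑ j, B i j :=
      sum_le_sum fun j _ => single_le_sum (fun l _ => hB j l) (mem_univ i)
    simp only [S, ← sum_div, sum_add_distrib]
    linarith
  refine ⟨c, hc, Matrix.of fun i j => S i j / c + if i = j then 1 - (∑ k, S i k) / c else 0,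
    ⟨fun i j => ?_, fun i j => ?_, fun i => ?_⟩, fun Ψ hΨ hΨ₀ => ?_⟩
  · obtain rfl | hij := eq_or_ne i j
    · rfl
    simp [S, hij, hij.symm, add_comm]
  · have h1 := (div_lt_one hc).mpr (hS i)
    have h2 : 0 ≤ S i j / c :=
      div_nonneg (div_nonneg (add_nonneg (hB i j) (hB j i)) two_pos.le) hc.le
    simp only [Matrix.of_apply]
    split_ifs <;> linarith
  · simp [sum_add_distrib, ← sum_div]
  · have hSΨ : ∑ i, ∑ j, S i j * Ψ i j = ∑ i, ∑ j, B i j * Ψ i j := by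
      simp only [S, add_div, add_mul, sum_add_distrib]
      rw [sum_comm (f := fun i j => B j i / 2 * Ψ i j)]
      simp only [hΨ _ _, ← sum_add_distrib]
      exact sum_congr rfl fun i _ => sum_congr rfl fun j _ => by ring
    simp [add_mul, sum_add_distrib, ite_mul, hΨ₀, div_mul_eq_mul_div, ← sum_div, hSΨ,
      mul_div_cancel₀ _ hc.ne']

theorem ContinuousLinearMap.apply_eq_sum_sum {ι κ : Type*} [Fintype ι] [Fintype κ]
    [DecidableEq ι] [DecidableEq κ] (ℓ : (ι → κ → ℝ) →L[ℝ] ℝ) (Ψ : ι → κ → ℝ) :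
    ℓ Ψ = ∑ i, ∑ j, ℓ (Pi.single i (Pi.single j 1)) * Ψ i j := by
  have : Ψ = ∑ i, ∑ j, Ψ i j • Pi.single i (Pi.single j (1 : ℝ)) := by
    ext k l
    simp [Finset.sum_apply, Pi.single_apply, ite_apply]
  conv_lhs => rw [this]
  simp [map_sum, map_smul, mul_comm]

theorem ContinuousLinearMap.map_nonpos_of_forall_le_lt {E : Type*} [AddCommGroup E]
    [PartialOrder E] [IsOrderedAddMonoid E] [Module ℝ E] [PosSMulMono ℝ E] [TopologicalSpace E]
    (ℓ : E →L[ℝ] ℝ) {M : E} {v : ℝ} (h : ∀ Ψ ∈ Set.Iic M, v < ℓ Ψ) {Z : E} (hZ : 0 ≤ Z) :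
    ℓ Z ≤ 0 := by
  by_contra! hZpos
  have hM := h M le_rfl
  have := h (M - ((ℓ M - v) / ℓ Z) • Z)
    (sub_le_self _ (smul_nonneg (div_nonneg (by linarith) hZpos.le) hZ))
  rw [map_sub, ℓ.map_smul, smul_eq_mul, div_mul_cancel₀ _ hZpos.ne'] at this
  linarith

theorem exists_mem_negTypeWithSum_le_mul {K T : ℝ} {w : Fin n → Fin n → ℝ}
    (hw : ∀ i j, w i j = w j i) (hw₀ : ∀ i, w i i = 0)
    (h : ∀ A : Matrix (Fin n) (Fin n) ℝ, IsSymmStochastic A →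
      ∃ Φ ∈ negTypeWithSum n T, ∑ i, ∑ j, A i j * Φ i j ≤ K * ∑ i, ∑ j, A i j * w i j) :
    ∃ Φ ∈ negTypeWithSum n T, ∀ i j, Φ i j ≤ K * w i j := by
  by_contra! hcon
  have hdisj : Disjoint (negTypeWithSum n T) (Set.Iic (K • w)) :=
    Set.disjoint_left.mpr fun Φ hΦ hΦw =>
      let ⟨i, j, hij⟩ := hcon Φ hΦ
      (hΦw i j).not_gt hij
  obtain ⟨ℓ, u, v, hℓΦ, huv, hℓw⟩ := geometric_hahn_banach_compact_closed
    (convex_negTypeWithSum T) (isCompact_negTypeWithSum T) (convex_Iic (K • w)) isClosed_Iic hdisj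
  set B : Fin n → Fin n → ℝ := fun i j => -ℓ (Pi.single i (Pi.single j 1))
  have hℓ : ∀ Ψ, ℓ Ψ = -∑ i, ∑ j, B i j * Ψ i j := fun Ψ => by
    simp [B, ℓ.apply_eq_sum_sum Ψ]
  have hB : ∀ i j, 0 ≤ B i j := fun i j => neg_nonneg.mpr <| ℓ.map_nonpos_of_forall_le_lt hℓw <|
    Pi.single_nonneg.mpr (Pi.single_nonneg.mpr zero_le_one)
  obtain ⟨c, hc, A, hA, hBA⟩ := exists_symmStochastic_sum_sum_mul_eq B hB
  obtain ⟨Φ, hΦ, hΦA⟩ := h A hA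
  have hsep_w := hℓw _ (Set.mem_Iic.mpr le_rfl)
  have hsep_Φ := hℓΦ Φ hΦ
  rw [hℓ] at hsep_w hsep_Φ
  rw [hBA Φ hΦ.1.1 hΦ.1.2.1] at hsep_Φ
  rw [hBA (K • w) (fun i j => by simp [hw i j]) (fun i => by simp [hw₀])] at hsep_w
  simp only [Pi.smul_apply, smul_eq_mul, mul_left_comm _ K, ← mul_sum] at hsep_w
  linarith [mul_le_mul_of_nonneg_left hΦA hc.le]

theorem exists_lp_of_forall_poincare {K : ℝ} {w : Fin n → Fin n → ℝ}
    (hw : ∀ i j, w i j = w j i) (hw₀ : ∀ i, w i i = 0) (hw_nonneg : ∀ i j, 0 ≤ w i j)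
    (h : ∀ A : Matrix (Fin n) (Fin n) ℝ, IsSymmStochastic A →
      (1 - lambdaTwo A) * ∑ i, ∑ j, w i j ≤ K * n * ∑ i, ∑ j, A i j * w i j) :
    ∃ f : Fin n → lp (fun _ : ℕ => ℝ) 2,
      (∀ i j, ‖f i - f j‖ ^ 2 ≤ K * w i j) ∧ ∑ i, ∑ j, ‖f i - f j‖ ^ 2 = ∑ i, ∑ j, w i j := by
  rcases lt_or_ge n 2 with hn | hn
  · have hw0 : ∀ i j : Fin n, w i j = 0 := fun i j => by
      rw [Fin.ext (by omega : (i : ℕ) = j), hw₀]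
    exact ⟨0, fun i j => by simp [hw0], by simp [hw0]⟩
  have hT : 0 ≤ ∑ i, ∑ j, w i j := sum_nonneg fun i _ => sum_nonneg fun j _ => hw_nonneg i j
  obtain ⟨Φ, ⟨hΦ, hΦT⟩, hΦw⟩ := exists_mem_negTypeWithSum_le_mul hw hw₀ fun A hA =>
    hA.exists_mem_negTypeWithSum_le hn hT (by rw [mul_left_comm, ← mul_assoc]; exact h A hA)
  obtain ⟨f, hf⟩ := hΦ.exists_lp
  exact ⟨f, fun i j => hf i j ▸ hΦw i j, by simp only [hf, hΦT]⟩

end Duality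

theorem linear_vs_nonlinear_gap_duality {n : ℕ} (K : ℝ) (hK : 1 ≤ K)
    (X : Type*) [MetricSpace X] :
    (∀ A : Matrix (Fin n) (Fin n) ℝ, IsSymmStochastic A →
        gammaNL A X 2 ≤ ENNReal.ofReal K / ENNReal.ofReal (1 - lambdaTwo A)) ↔
      (∀ D : ℝ, K < D → ∀ x : Fin n → X,
        ∃ (f : Fin n → lp (fun _ : ℕ => ℝ) 2) (L : ℝ),
          0 < L ∧
          (∀ i j, ‖f i - f j‖ ≤ L * dist (x i) (x j)) ∧
          L ^ 2 / D * ∑ i, ∑ j, dist (x i) (x j) ^ 2 ≤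
            ∑ i, ∑ j, ‖f i - f j‖ ^ 2) := by
  have hK₀ : 0 < K := by linarith
  rw [forall₂_congr fun A (hA : IsSymmStochastic A) => hA.gammaNL_two_le_iff (X := X) hK₀]
  constructor
  · intro h D hD x
    obtain ⟨f, hf, hsum⟩ := exists_lp_of_forall_poincare (w := fun i j => dist (x i) (x j) ^ 2)
      (fun i j => by rw [dist_comm]) (by simp) (fun _ _ => by positivity) fun A hA => h A hA x
    refine ⟨f, √K, Real.sqrt_pos.mpr hK₀, fun i j => ?_, ?_⟩
    · refine (pow_le_pow_iff_left₀ (norm_nonneg _) (by positivity) two_ne_zero).mp ?_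
      rw [mul_pow, Real.sq_sqrt hK₀.le]
      exact hf i j
    · rw [hsum, Real.sq_sqrt hK₀.le]
      exact mul_le_of_le_one_left (by positivity) ((div_le_one (by linarith)).mpr hD.le)
  · intro h A hA x
    rw [mul_assoc]
    refine le_mul_of_forall_lt_mul fun D hD => ?_
    obtain ⟨f, L, hL, hLip, hf⟩ := h D hD x
    rw [← mul_assoc]
    exact hA.poincare_of_lipschitz_lp (by linarith) hL hLip hf
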